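/- Let f be a homeomorphism of the open unit disk 𝔻. Suppose there exist a point z ∈ 𝔻 with f(z) ≠ z and f²(z) ≠ z, a translation arc γ for f joining z to f(z), and an integer k ≥ 2 such that f^k(γ) ∩ γ ≠ ∅. Then f is recurrent. (Proposition 1.4, case (ii).) -/

import Mathlib

open Set Filter Metric Topology

noncomputable section

/-- The open unit disk in the complex plane. -/
abbrev Disk : Set ℂ := Metric.ball 0 1

/-- The `k`-th iterate (`k ∈ ℤ`) of a homeomorphism of the open unit disk. -/
def fiter (f : ↥Disk ≃ₜ ↥Disk) (k : ℤ) : ↥Disk → ↥Disk := fun z => (f.toEquiv ^ k) z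

/-- A subset `X` of the disk is free for `f` if `f(X) ∩ X = ∅`. -/
def IsFreeSet (f : ↥Disk ≃ₜ ↥Disk) (X : Set ↥Disk) : Prop := (⇑f '' X) ∩ X = ∅

/-- An open disk: an open subset of `Disk` homeomorphic to `Disk`. -/
def IsOpenDisk (U : Set ↥Disk) : Prop := IsOpen U ∧ Nonempty (↥U ≃ₜ ↥Disk)

/-- `f` is recurrent: there is a closed chain of pairwise disjoint free open disks. -/
def RecurrentHomeo (f : ↥Disk ≃ₜ ↥Disk) : Prop :=
  ∃ r : ℕ, 1 ≤ r ∧ ∃ X : ZMod r → Set ↥Disk,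
    (∀ i, IsOpenDisk (X i)) ∧ (∀ i, IsFreeSet f (X i)) ∧
    (Pairwise fun i j => Disjoint (X i) (X j)) ∧
    (∀ i, ∃ k : ℤ, 1 ≤ k ∧ ((fiter f k '' X i) ∩ X (i + 1)).Nonempty)

/-- `γ` is a segment of the disk joining `a` to `b`: the image of an injective
continuous map defined on `[0,1]` sending `0` to `a` and `1` to `b`. -/
def IsSegment (γ : Set ↥Disk) (a b : ↥Disk) : Prop :=
  ∃ g : ℝ → ↥Disk, ContinuousOn g (Set.Icc 0 1) ∧ Set.InjOn g (Set.Icc 0 1) ∧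
    g 0 = a ∧ g 1 = b ∧ γ = g '' Set.Icc 0 1

/-- `γ` is a segment (with some endpoints). -/
def IsSegmentSet (γ : Set ↥Disk) : Prop := ∃ a b, IsSegment γ a b

/-- A translation arc for `f` at `z`. -/
def IsTranslationArc (f : ↥Disk ≃ₜ ↥Disk) (z : ↥Disk) (γ : Set ↥Disk) : Prop :=
  f z ≠ z ∧ IsSegment γ z (f z) ∧
  (f (f z) = z → (⇑f '' γ) ∩ γ = {z, f z}) ∧
  (f (f z) ≠ z → (⇑f '' γ) ∩ γ = {f z})

/-! Cut the translation arc `γ` just before its endpoint `f z`: since `f γ ∩ γ = {f z}`, such a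
subarc is compact, connected and free, and after replacing an endpoint `f z` by `z` the
hypothesis gives a point of it sent by some `f^m`, `m ≥ k - 1 ≥ 1`, to another of its points.
Separating the subarc from its image by disjoint open sets gives a free connected open
neighbourhood of it, and inside a connected open plane set any two points lie in a common open
topological disk (move a disk along a chain of round balls by homeomorphisms supported in the
balls). That one free open disk is a closed chain of length one. -/

section NormedSpace

variable {E : Type*} [NormedAddCommGroup E] [NormedSpace ℝ E]

/-- Moves `c` to `c + v` and is the identity off `ball c r`; it differs from the identity by a
`‖v‖ / r`-Lipschitz map, hence is a homeomorphism as soon as `‖v‖ < r`. -/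
def ballPush (c : E) (r : ℝ) (v w : E) : E := w + max 0 (1 - dist w c / r) • v

theorem ballPush_center (c : E) (r : ℝ) (v : E) : ballPush c r v c = c + v := by
  simp [ballPush]

theorem ballPush_of_notMem_ball {c : E} {r : ℝ} (hr : 0 < r) (v : E) {w : E}
    (hw : w ∉ ball c r) : ballPush c r v w = w := by
  have : 1 ≤ dist w c / r := (one_le_div hr).2 (not_lt.1 hw)
  simp [ballPush, max_eq_left (sub_nonpos.2 this)]

theorem approximatesLinearOn_ballPush (c : E) {r : ℝ} (hr : 0 < r) (v : E) :
    ApproximatesLinearOn (ballPush c r v) (ContinuousLinearEquiv.refl ℝ E : E →L[ℝ] E) univ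
      (‖v‖₊ / r.toNNReal) := by
  intro x _ y _
  have hbump : |max 0 (1 - dist x c / r) - max 0 (1 - dist y c / r)| ≤ ‖x - y‖ / r := by
    calc |max 0 (1 - dist x c / r) - max 0 (1 - dist y c / r)|
        ≤ |(1 - dist x c / r) - (1 - dist y c / r)| := by
          simpa only [max_comm (0 : ℝ)] using abs_max_sub_max_le_abs _ _ (0 : ℝ)
      _ = |dist y c - dist x c| / r := by
          rw [← abs_of_pos hr, ← abs_div, abs_of_pos hr]; ring_nf
      _ ≤ ‖x - y‖ / r := by
          gcongr; rw [← dist_eq_norm, dist_comm x y]; exact abs_dist_sub_le y x c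
  calc ‖ballPush c r v x - ballPush c r v y - (x - y)‖
      = ‖(max 0 (1 - dist x c / r) - max 0 (1 - dist y c / r)) • v‖ := by
        rw [ballPush, ballPush, sub_smul]; congr 1; abel
    _ ≤ ‖x - y‖ / r * ‖v‖ := by rw [norm_smul, Real.norm_eq_abs]; gcongr
    _ = ↑(‖v‖₊ / r.toNNReal) * ‖x - y‖ := by
        simp only [NNReal.coe_div, coe_nnnorm, Real.coe_toNNReal _ hr.le]; ring

theorem exists_homeomorph_center_eq_eqOn_compl_ball [CompleteSpace E] {c q : E} {r : ℝ}
    (hq : q ∈ ball c r) : ∃ Φ : E ≃ₜ E, Φ c = q ∧ EqOn Φ id (ball c r)ᶜ := by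
  have hr : 0 < r := pos_of_mem_ball hq
  have hcontr : Subsingleton E ∨
      ‖q - c‖₊ / r.toNNReal < ‖((ContinuousLinearEquiv.refl ℝ E).symm : E →L[ℝ] E)‖₊⁻¹ := by
    rcases subsingleton_or_nontrivial E with hE | hE
    · exact .inl hE
    refine .inr ?_
    rw [ContinuousLinearEquiv.refl_symm, ContinuousLinearEquiv.coe_refl,
      ContinuousLinearMap.nnnorm_id, inv_one, div_lt_one (by simpa using hr), ← NNReal.coe_lt_coe,
      coe_nnnorm, Real.coe_toNNReal _ hr.le, ← dist_eq_norm]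
    exact hq
  refine ⟨(approximatesLinearOn_ballPush c hr (q - c)).toHomeomorph _ hcontr, ?_, ?_⟩
  · show ballPush c r (q - c) c = q
    rw [ballPush_center, add_sub_cancel]
  · exact fun w hw => ballPush_of_notMem_ball hr _ hw

theorem nonempty_homeomorph_ball_unitBall (c : E) {r : ℝ} (hr : 0 < r) :
    Nonempty (ball c r ≃ₜ ball (0 : E) 1) := by
  have e := (OpenPartialHomeomorph.unitBallBall c r hr).toHomeomorphSourceTarget
  rw [OpenPartialHomeomorph.unitBallBall_source, OpenPartialHomeomorph.unitBallBall_target] at e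
  exact ⟨e.symm⟩

def JoinedByDiskIn (O : Set E) (x y : E) : Prop :=
  ∃ U ⊆ O, IsOpen U ∧ x ∈ U ∧ y ∈ U ∧ Nonempty (U ≃ₜ ball (0 : E) 1)

theorem joinedByDiskIn_of_mem_ball {O : Set E} {c x y : E} {r : ℝ} (hO : ball c r ⊆ O)
    (hx : x ∈ ball c r) (hy : y ∈ ball c r) : JoinedByDiskIn O x y :=
  ⟨ball c r, hO, isOpen_ball, hx, hy, nonempty_homeomorph_ball_unitBall c (pos_of_mem_ball hx)⟩

theorem JoinedByDiskIn.center_of_mem_ball [CompleteSpace E] {O : Set E} {c x q : E} {r : ℝ}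
    (hxq : JoinedByDiskIn O x q) (hq : q ∈ ball c r) (hO : ball c r ⊆ O) :
    JoinedByDiskIn O x c := by
  by_cases hx : x ∈ ball c r
  · exact joinedByDiskIn_of_mem_ball hO hx (mem_ball_self (pos_of_mem_ball hq))
  obtain ⟨U, hUO, hU, hxU, hqU, ⟨e⟩⟩ := hxq
  obtain ⟨Φ, hΦc, hΦ⟩ := exists_homeomorph_center_eq_eqOn_compl_ball hq
  refine ⟨Φ ⁻¹' U, fun t htU => ?_, hU.preimage Φ.continuous, ?_, ?_, ?_⟩
  · by_cases htc : t ∈ ball c r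
    · exact hO htc
    · simpa [hΦ htc] using hUO htU
  · exact mem_preimage.2 (hΦ hx ▸ hxU)
  · exact mem_preimage.2 (hΦc ▸ hqU)
  · exact ⟨(Φ.isEmbedding.homeomorphOfSubsetRange (by simp)).trans e⟩

theorem IsPreconnected.joinedByDiskIn [CompleteSpace E] {O : Set E} (hO : IsOpen O)
    (hc : IsPreconnected O) {x y : E} (hx : x ∈ O) (hy : y ∈ O) : JoinedByDiskIn O x y := by
  set S := {p | JoinedByDiskIn O x p}
  have hS : IsOpen S := isOpen_iff_forall_mem_open.2 fun p ⟨U, hUO, hU, hxU, hpU, he⟩ =>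
    ⟨U, fun q hq => ⟨U, hUO, hU, hxU, hq, he⟩, hU, hpU⟩
  have hOS : IsOpen (O \ S) := by
    refine isOpen_iff_forall_mem_open.2 fun p ⟨hpO, hpS⟩ => ?_
    obtain ⟨r, hr, hrO⟩ := Metric.isOpen_iff.1 hO p hpO
    exact ⟨ball p r, fun q hq => ⟨hrO hq, fun hqS => hpS (hqS.center_of_mem_ball hq hrO)⟩,
      isOpen_ball, mem_ball_self hr⟩
  have hxS : x ∈ S := by
    obtain ⟨r, hr, hrO⟩ := Metric.isOpen_iff.1 hO x hx
    exact joinedByDiskIn_of_mem_ball hrO (mem_ball_self hr) (mem_ball_self hr)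
  exact hc.subset_left_of_subset_union hS hOS disjoint_sdiff_right (by simp) ⟨x, hx, hxS⟩ hy

end NormedSpace

theorem IsCompact.exists_isOpen_superset_disjoint_image {X : Type*} [TopologicalSpace X]
    [T2Space X] {f : X → X} (hf : Continuous f) {K : Set X} (hK : IsCompact K)
    (hdisj : Disjoint (f '' K) K) : ∃ V, IsOpen V ∧ K ⊆ V ∧ Disjoint (f '' V) V := by
  obtain ⟨A, B, hA, hB, hfKA, hKB, hAB⟩ :=
    SeparatedNhds.of_isCompact_isCompact (hK.image hf) hK hdisj
  refine ⟨B ∩ f ⁻¹' A, hB.inter (hA.preimage hf), subset_inter hKB (image_subset_iff.1 hfKA), ?_⟩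
  exact hAB.mono (image_subset_iff.2 inter_subset_right) inter_subset_left

theorem isFreeSet_iff_disjoint {f : ↥Disk ≃ₜ ↥Disk} {X : Set ↥Disk} :
    IsFreeSet f X ↔ Disjoint (f '' X) X :=
  disjoint_iff_inter_eq_empty.symm

theorem exists_isOpenDisk_isFreeSet {f : ↥Disk ≃ₜ ↥Disk} {σ : Set ↥Disk} (hσc : IsCompact σ)
    (hσ : IsPreconnected σ) (hfree : IsFreeSet f σ) {x y : ↥Disk} (hx : x ∈ σ) (hy : y ∈ σ) :
    ∃ X, IsOpenDisk X ∧ IsFreeSet f X ∧ x ∈ X ∧ y ∈ X := by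
  obtain ⟨V, hV, hσV, hVfree⟩ :=
    hσc.exists_isOpen_superset_disjoint_image f.continuous (isFreeSet_iff_disjoint.1 hfree)
  let h : ℂ ≃ₜ ↥Disk := Homeomorph.unitBall
  have hx' : h.symm x ∈ h ⁻¹' σ := by simpa using hx
  have hy' : h.symm y ∈ h ⁻¹' σ := by simpa using hy
  set O := connectedComponentIn (h ⁻¹' V) (h.symm x)
  have hσO : h ⁻¹' σ ⊆ O :=
    (h.isPreconnected_preimage.2 hσ).subset_connectedComponentIn hx' (preimage_mono hσV)
  obtain ⟨U, hUO, hU, hxU, hyU, ⟨e⟩⟩ :=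
    isPreconnected_connectedComponentIn.joinedByDiskIn
      (hV.preimage h.continuous).connectedComponentIn (hσO hx') (hσO hy')
  have hUV : h '' U ⊆ V := image_subset_iff.2 (hUO.trans (connectedComponentIn_subset _ _))
  refine ⟨h '' U, ⟨h.isOpenMap U hU, ⟨(h.image U).symm.trans e⟩⟩, ?_, ?_, ?_⟩
  · exact isFreeSet_iff_disjoint.2 (hVfree.mono (image_mono hUV) hUV)
  · simpa using mem_image_of_mem h hxU
  · simpa using mem_image_of_mem h hyU

theorem recurrentHomeo_of_isOpenDisk {f : ↥Disk ≃ₜ ↥Disk} {X : Set ↥Disk} (hX : IsOpenDisk X)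
    (hfree : IsFreeSet f X) {m : ℤ} (hm : 1 ≤ m) (hmeet : ((fiter f m '' X) ∩ X).Nonempty) :
    RecurrentHomeo f :=
  ⟨1, le_rfl, fun _ => X, fun _ => hX, fun _ => hfree, Subsingleton.pairwise,
    fun _ => ⟨m, hm, hmeet⟩⟩

theorem fiter_add (f : ↥Disk ≃ₜ ↥Disk) (a b : ℤ) (u : ↥Disk) :
    fiter f (a + b) u = fiter f a (fiter f b u) := by
  simp [fiter, zpow_add, Equiv.Perm.mul_apply]

theorem fiter_zero (f : ↥Disk ≃ₜ ↥Disk) (u : ↥Disk) : fiter f 0 u = u := by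
  simp [fiter]

theorem fiter_one (f : ↥Disk ≃ₜ ↥Disk) (u : ↥Disk) : fiter f 1 u = f u := by
  simp [fiter]

theorem IsSegment.exists_isPreconnected_subset_diff {γ : Set ↥Disk} {a b : ↥Disk}
    (hγ : IsSegment γ a b) {u v : ↥Disk} (hu : u ∈ γ \ {b}) (hv : v ∈ γ \ {b}) :
    ∃ σ ⊆ γ \ {b}, IsCompact σ ∧ IsPreconnected σ ∧ u ∈ σ ∧ v ∈ σ := by
  obtain ⟨g, hgc, hgi, -, rfl, rfl⟩ := hγ
  obtain ⟨⟨s, hs, rfl⟩, hsb⟩ := hu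
  obtain ⟨⟨t, ht, rfl⟩, htb⟩ := hv
  have hs1 : s < 1 := hs.2.lt_of_ne (by rintro rfl; exact hsb rfl)
  have ht1 : t < 1 := ht.2.lt_of_ne (by rintro rfl; exact htb rfl)
  have hsub : Icc 0 (max s t) ⊆ Icc (0 : ℝ) 1 := Icc_subset_Icc le_rfl (max_lt hs1 ht1).le
  refine ⟨g '' Icc 0 (max s t), ?_, isCompact_Icc.image_of_continuousOn (hgc.mono hsub),
    isPreconnected_Icc.image g (hgc.mono hsub), mem_image_of_mem g ⟨hs.1, le_max_left s t⟩,
    mem_image_of_mem g ⟨ht.1, le_max_right s t⟩⟩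
  rintro _ ⟨r, hr, rfl⟩
  refine ⟨mem_image_of_mem g (hsub hr), fun hr1 => ?_⟩
  have : r = 1 := hgi (hsub hr) ⟨zero_le_one, le_rfl⟩ hr1
  exact (max_lt hs1 ht1).not_ge (this ▸ hr.2)

section TranslationArc

variable {f : ↥Disk ≃ₜ ↥Disk} {z : ↥Disk} {γ : Set ↥Disk}

theorem IsTranslationArc.mem_left (hγ : IsTranslationArc f z γ) : z ∈ γ := by
  obtain ⟨-, ⟨g, -, -, hg0, -, rfl⟩, -⟩ := hγ
  exact ⟨0, ⟨le_rfl, zero_le_one⟩, hg0⟩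

theorem IsTranslationArc.isFreeSet_of_subset (hγ : IsTranslationArc f z γ) (hz2 : f (f z) ≠ z)
    {σ : Set ↥Disk} (hσ : σ ⊆ γ \ {f z}) : IsFreeSet f σ := by
  refine eq_empty_of_forall_notMem fun p ⟨hpf, hpσ⟩ => (hσ hpσ).2 ?_
  rw [← hγ.2.2.2 hz2]
  exact ⟨image_mono (fun q hq => (hσ hq).1) hpf, (hσ hpσ).1⟩

theorem IsTranslationArc.exists_fiter_eq (hγ : IsTranslationArc f z γ) {u : ↥Disk}
    (hu : u ∈ γ) : ∃ u' ∈ γ \ {f z}, ∃ e : ℤ, 0 ≤ e ∧ e ≤ 1 ∧ fiter f e u' = u := by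
  by_cases huz : u = f z
  · exact ⟨z, ⟨hγ.mem_left, hγ.1.symm⟩, 1, zero_le_one, le_rfl, huz ▸ fiter_one f z⟩
  · exact ⟨u, ⟨hu, huz⟩, 0, le_rfl, zero_le_one, fiter_zero f u⟩

end TranslationArc

theorem handel_prop_1_4_ii_general (f : ↥Disk ≃ₜ ↥Disk) (z : ↥Disk)
    (hz2 : f (f z) ≠ z)
    (γ : Set ↥Disk) (hγ : IsTranslationArc f z γ)
    (k : ℤ) (hk : 2 ≤ k)
    (hmeet : ((fiter f k '' γ) ∩ γ).Nonempty) :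
    RecurrentHomeo f := by
  obtain ⟨p, ⟨w, hwγ, hwp⟩, hpγ⟩ := hmeet
  obtain ⟨w', hw', a, ha0, -, rfl⟩ := hγ.exists_fiter_eq hwγ
  obtain ⟨p', hp', b, -, hb1, rfl⟩ := hγ.exists_fiter_eq hpγ
  have hwp' : fiter f (k + a - b) w' = p' := by
    rw [sub_eq_neg_add, fiter_add, fiter_add, hwp, ← fiter_add, neg_add_cancel, fiter_zero]
  obtain ⟨σ, hσγ, hσc, hσ, hwσ, hpσ⟩ := hγ.2.1.exists_isPreconnected_subset_diff hw' hp'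
  obtain ⟨X, hX, hXfree, hwX, hpX⟩ :=
    exists_isOpenDisk_isFreeSet hσc hσ (hγ.isFreeSet_of_subset hz2 hσγ) hwσ hpσ
  exact recurrentHomeo_of_isOpenDisk hX hXfree (by omega) ⟨p', ⟨w', hwX, hwp'⟩, hpX⟩

/-- Proposition 1.4, case (ii). -/
theorem handel_prop_1_4_ii (f : ↥Disk ≃ₜ ↥Disk) (z : ↥Disk)
    (hz : f z ≠ z) (hz2 : f (f z) ≠ z)
    (γ : Set ↥Disk) (hγ : IsTranslationArc f z γ)
    (k : ℤ) (hk : 2 ≤ k)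
    (hmeet : ((fiter f k '' γ) ∩ γ).Nonempty) :
    RecurrentHomeo f :=
  handel_prop_1_4_ii_general f z hz2 γ hγ k hk hmeet
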